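/- arXiv:2602.05896 — 3 statements merged into one kernel-verified Lean document; each statement's English description precedes it below -/
import Mathlib

section
/- For all real α ∈ [5, 100], there exists a constant C such that for all natural numbers n ≥ 1, |∑_{i=1}^n i^α − (n^(α+1)/(α+1) + n^α/2 + α·n^(α−1)/12)| ≤ C·n^(α−2). -/
/-!
With `F x = x^(α+1)/(α+1) + x^α/2 + α x^(α-1)/12`, the error after `n` terms telescopes into
the sum of the one-step defects `F i - F (i-1) - i^α`, so it suffices that each defect is
`O(i^(α-3))`. Writing `(x-1)^γ = x^γ (1 - 1/x)^γ` and expanding by the binomial series to orders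
4, 3 and 2 for `γ = α+1, α, α-1`, all terms down to `x^(α-2)` cancel exactly, and what is left
are the three binomial remainders, each `O(x^(α-3))`.

For `m ≤ γ` and `0 ≤ h ≤ 1`, `(1-h)^γ` minus its Taylor polynomial of degree `< m` is
at most `γ(γ-1)⋯(γ-m+1) h^m`: its derivative in `h` is `-γ` times the same difference for
`γ-1` and `m-1`, so the bound follows by induction and the mean value theorem.
-/

open Finset Nat Polynomial

noncomputable def oneSubRpowTaylor (γ : ℝ) (m : ℕ) (h : ℝ) : ℝ :=
  ∑ k ∈ range m, (descPochhammer ℝ k).eval γ / k ! * (-h) ^ k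

lemma descPochhammer_succ_eval_div_factorial (γ : ℝ) (k : ℕ) :
    (descPochhammer ℝ (k + 1)).eval γ / (k + 1)! * (k + 1) =
      γ * ((descPochhammer ℝ k).eval (γ - 1) / k !) := by
  rw [descPochhammer_succ_left, Nat.factorial_succ]
  simp only [eval_mul, eval_X, eval_comp, eval_sub, eval_one, cast_mul, cast_add, cast_one]
  field_simp

lemma hasDerivAt_oneSubRpowTaylor_succ (γ : ℝ) (m : ℕ) (t : ℝ) :
    HasDerivAt (oneSubRpowTaylor γ (m + 1)) (-γ * oneSubRpowTaylor (γ - 1) m t) t := by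
  unfold oneSubRpowTaylor
  simp_rw [sum_range_succ' _ m]
  have hterm : ∀ k ∈ range m,
      HasDerivAt (fun s => (descPochhammer ℝ (k + 1)).eval γ / (k + 1)! * (-s) ^ (k + 1))
        (-γ * ((descPochhammer ℝ k).eval (γ - 1) / k ! * (-t) ^ k)) t := by
    intro k _
    refine (((hasDerivAt_neg' t).fun_pow (k + 1)).const_mul _).congr_deriv ?_
    rw [add_tsub_cancel_right]
    push_cast
    linear_combination (-(-t) ^ k) * descPochhammer_succ_eval_div_factorial γ k
  simpa [mul_sum] using (HasDerivAt.sum hterm).add_const (1 : ℝ)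

theorem abs_one_sub_rpow_sub_oneSubRpowTaylor_le (m : ℕ) {γ h : ℝ} (hγ : (m : ℝ) ≤ γ)
    (h0 : 0 ≤ h) (h1 : h ≤ 1) :
    |(1 - h) ^ γ - oneSubRpowTaylor γ m h| ≤ (descPochhammer ℝ m).eval γ * h ^ m := by
  induction m generalizing γ h with
  | zero =>
    have hγ0 : 0 ≤ γ := by simpa using hγ
    have hpos : 0 ≤ (1 - h) ^ γ := by bound
    simpa [oneSubRpowTaylor, abs_of_nonneg hpos] using
      Real.rpow_le_one (by linarith) (by linarith) hγ0
  | succ m ih =>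
    push_cast at hγ
    have hderiv : ∀ t ∈ Set.Icc 0 h,
        HasDerivWithinAt (fun s => (1 - s) ^ γ - oneSubRpowTaylor γ (m + 1) s)
          (-γ * ((1 - t) ^ (γ - 1) - oneSubRpowTaylor (γ - 1) m t)) (Set.Icc 0 h) t := by
      intro t _
      have hpow : HasDerivAt (fun s => (1 - s) ^ γ) (-γ * (1 - t) ^ (γ - 1)) t := by
        simpa [mul_comm] using
          ((hasDerivAt_id t).const_sub 1).rpow_const (p := γ) (Or.inr (by linarith))
      exact ((hpow.sub (hasDerivAt_oneSubRpowTaylor_succ γ m t)).congr_deriv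
        (by ring)).hasDerivWithinAt
    have hbound : ∀ t ∈ Set.Ico 0 h,
        ‖-γ * ((1 - t) ^ (γ - 1) - oneSubRpowTaylor (γ - 1) m t)‖
          ≤ (descPochhammer ℝ (m + 1)).eval γ * h ^ m := by
      rintro t ⟨ht0, hth⟩
      have hP : 0 ≤ (descPochhammer ℝ m).eval (γ - 1) := descPochhammer_nonneg (by linarith)
      rw [descPochhammer_succ_left, Real.norm_eq_abs, abs_mul, abs_neg,
        abs_of_nonneg (by linarith : 0 ≤ γ)]
      simp only [eval_mul, eval_X, eval_comp, eval_sub, eval_one, mul_assoc]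
      refine mul_le_mul_of_nonneg_left ?_ (by linarith)
      calc _ ≤ (descPochhammer ℝ m).eval (γ - 1) * t ^ m := ih (by linarith) ht0 (by linarith)
        _ ≤ _ := by gcongr
    have := norm_image_sub_le_of_norm_deriv_le_segment' hderiv hbound h ⟨h0, le_rfl⟩
    simpa [oneSubRpowTaylor, sum_range_succ', pow_succ, mul_assoc] using this

noncomputable def binomialRemainder (γ : ℝ) (m : ℕ) (x : ℝ) : ℝ :=
  (x - 1) ^ γ - x ^ γ * oneSubRpowTaylor γ m x⁻¹

theorem abs_binomialRemainder_le (m : ℕ) {γ x : ℝ} (hγ : (m : ℝ) ≤ γ) (hx : 1 ≤ x) :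
    |binomialRemainder γ m x| ≤ (descPochhammer ℝ m).eval γ * x ^ (γ - m) := by
  have hx0 : 0 < x := by linarith
  have hfactor : (x - 1) ^ γ = x ^ γ * (1 - x⁻¹) ^ γ := by
    rw [← Real.mul_rpow hx0.le (by simpa using inv_le_one_of_one_le₀ hx), mul_sub, mul_one,
      mul_inv_cancel₀ hx0.ne']
  rw [binomialRemainder, hfactor, ← mul_sub, abs_mul, abs_of_pos (by positivity),
    Real.rpow_sub_natCast hx0.ne', div_eq_mul_inv, ← inv_pow, mul_left_comm]
  exact mul_le_mul_of_nonneg_left (abs_one_sub_rpow_sub_oneSubRpowTaylor_le m hγ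
    (by positivity) (inv_le_one_of_one_le₀ hx)) (by positivity)

noncomputable def faulhaberApprox (α x : ℝ) : ℝ :=
  x ^ (α + 1) / (α + 1) + x ^ α / 2 + α * x ^ (α - 1) / 12

theorem faulhaberApprox_sub_sub_rpow_eq {α x : ℝ} (hα : α + 1 ≠ 0) (hx : 0 < x) :
    faulhaberApprox α x - faulhaberApprox α (x - 1) - x ^ α =
      -(binomialRemainder (α + 1) 4 x / (α + 1) + binomialRemainder α 3 x / 2
        + α * binomialRemainder (α - 1) 2 x / 12) := by
  have e1 : x ^ (α + 1) = x ^ (α - 1) * x ^ 2 := by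
    rw [← Real.rpow_natCast, ← Real.rpow_add hx]; push_cast; ring_nf
  have e2 : x ^ α = x ^ (α - 1) * x := by
    rw [← Real.rpow_add_one hx.ne']; ring_nf
  simp only [binomialRemainder, faulhaberApprox, oneSubRpowTaylor, sum_range_succ,
    descPochhammer_succ_eval, descPochhammer_zero, eval_one, Nat.factorial]
  rw [e1, e2]
  field_simp
  ring

theorem exists_abs_faulhaberApprox_sub_sub_rpow_le {α : ℝ} (hα : 3 ≤ α) :
    ∃ K, ∀ x : ℝ, 1 ≤ x →
      |faulhaberApprox α x - faulhaberApprox α (x - 1) - x ^ α| ≤ K * x ^ (α - 3) := by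
  refine ⟨(descPochhammer ℝ 4).eval (α + 1) / (α + 1) + (descPochhammer ℝ 3).eval α / 2
    + α * (descPochhammer ℝ 2).eval (α - 1) / 12, fun x hx => ?_⟩
  have hA : 0 < α + 1 := by linarith
  have h1 := abs_binomialRemainder_le 4 (γ := α + 1) (by push_cast; linarith) hx
  have h2 := abs_binomialRemainder_le 3 (γ := α) (by push_cast; linarith) hx
  have h3 := abs_binomialRemainder_le 2 (γ := α - 1) (by push_cast; linarith) hx
  rw [show α + 1 - ((4 : ℕ) : ℝ) = α - 3 by push_cast; ring] at h1
  rw [show α - ((3 : ℕ) : ℝ) = α - 3 by push_cast; ring] at h2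
  rw [show α - 1 - ((2 : ℕ) : ℝ) = α - 3 by push_cast; ring] at h3
  set R1 := binomialRemainder (α + 1) 4 x
  set R2 := binomialRemainder α 3 x
  set R3 := binomialRemainder (α - 1) 2 x
  rw [faulhaberApprox_sub_sub_rpow_eq hA.ne' (by linarith), abs_neg]
  calc |R1 / (α + 1) + R2 / 2 + α * R3 / 12|
      ≤ |R1| / (α + 1) + |R2| / 2 + α * |R3| / 12 := by
        refine (abs_add_le _ _).trans
          (add_le_add ((abs_add_le _ _).trans (le_of_eq ?_)) (le_of_eq ?_))
        · rw [abs_div, abs_div, abs_of_pos hA, abs_two]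
        · rw [abs_div, abs_mul, abs_of_nonneg (by linarith : 0 ≤ α)]; norm_num
    _ ≤ (descPochhammer ℝ 4).eval (α + 1) * x ^ (α - 3) / (α + 1)
        + (descPochhammer ℝ 3).eval α * x ^ (α - 3) / 2
        + α * ((descPochhammer ℝ 2).eval (α - 1) * x ^ (α - 3)) / 12 := by
        gcongr
    _ = _ := by ring

theorem abs_sum_Icc_sub_le_of_abs_step_le {f g b : ℕ → ℝ} (hg : g 0 = 0)
    (hstep : ∀ i, |g (i + 1) - g i - f (i + 1)| ≤ b (i + 1)) (n : ℕ) :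
    |∑ i ∈ Icc 1 n, f i - g n| ≤ ∑ i ∈ Icc 1 n, b i := by
  induction n with
  | zero => simp [hg]
  | succ n ih =>
    rw [sum_Icc_succ_top (by omega), sum_Icc_succ_top (by omega)]
    calc |∑ i ∈ Icc 1 n, f i + f (n + 1) - g (n + 1)|
        = |(∑ i ∈ Icc 1 n, f i - g n) - (g (n + 1) - g n - f (n + 1))| := by ring_nf
      _ ≤ _ := (abs_sub _ _).trans (add_le_add ih (hstep n))

theorem faulhaber_third_order (α : ℝ) (hα : α ∈ Set.Icc (5:ℝ) 100) :
    ∃ C : ℝ, ∀ n : ℕ, 1 ≤ n →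
      |(∑ i ∈ Finset.Icc 1 n, (i : ℝ) ^ α)
          - ((n : ℝ) ^ (α + 1) / (α + 1) + (n : ℝ) ^ α / 2 + α * (n : ℝ) ^ (α - 1) / 12)|
        ≤ C * (n : ℝ) ^ (α - 2) := by
  have hα3 : 3 ≤ α := by linarith [hα.1]
  obtain ⟨K, hK⟩ := exists_abs_faulhaberApprox_sub_sub_rpow_le hα3
  have hK0 : 0 ≤ K := by simpa using (abs_nonneg _).trans (hK 1 le_rfl)
  refine ⟨K, fun n _ => ?_⟩
  have hzero : faulhaberApprox α ((0 : ℕ) : ℝ) = 0 := by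
    simp [faulhaberApprox, Real.zero_rpow (by linarith : α + 1 ≠ 0),
      Real.zero_rpow (by linarith : α ≠ 0), Real.zero_rpow (by linarith : α - 1 ≠ 0)]
  have hstep (i : ℕ) : |faulhaberApprox α ((i + 1 : ℕ) : ℝ) - faulhaberApprox α (i : ℝ)
      - ((i + 1 : ℕ) : ℝ) ^ α| ≤ K * ((i + 1 : ℕ) : ℝ) ^ (α - 3) := by
    simpa using hK (i + 1) (by simp)
  calc _ ≤ ∑ i ∈ Icc 1 n, K * (i : ℝ) ^ (α - 3) :=
        abs_sum_Icc_sub_le_of_abs_step_le (g := fun i => faulhaberApprox α i) hzero hstep n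
    _ ≤ ∑ i ∈ Icc 1 n, K * (n : ℝ) ^ (α - 3) := by
        gcongr with i hi
        exact (mem_Icc.1 hi).2
    _ = K * (n : ℝ) ^ (α - 2) := by
        rw [sum_const, Nat.card_Icc, add_tsub_cancel_right, nsmul_eq_mul,
          show α - 2 = α - 3 + 1 by ring, Real.rpow_add_one' n.cast_nonneg (by linarith)]
        ring
end

section
/- (O'Neil's hyperplane-cut bound) There is a constant C such that for every n ≥ 1, every affine hyperplane in ℝ^n cuts at most C·√n·2^n edges of the Boolean hypercube {0,1}^n, where a hyperplane {x : ⟨a,x⟩ = b} cuts an edge {u,v} if ⟨a,u⟩ < b < ⟨a,v⟩ or ⟨a,v⟩ < b < ⟨a,u⟩. -/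
open Finset

/-- Dot product of a real vector with the 0/1 embedding of a Boolean vector. -/
def dotBool (n : ℕ) (a : Fin n → ℝ) (u : Fin n → Bool) : ℝ :=
  ∑ j : Fin n, a j * (if u j then 1 else 0)

/-- Edges of the hypercube strictly cut by the hyperplane `⟨a, x⟩ = b`, each edge
represented by its lower endpoint together with the direction coordinate. -/
noncomputable def cutEdges (n : ℕ) (a : Fin n → ℝ) (b : ℝ) :
    Finset ((Fin n → Bool) × Fin n) :=
  Finset.univ.filter fun p =>
    p.1 p.2 = false ∧
      (dotBool n a p.1 < b ∧ b < dotBool n a (Function.update p.1 p.2 true) ∨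
       dotBool n a (Function.update p.1 p.2 true) < b ∧ b < dotBool n a p.1)

/-!
The indicator `g` of the half-space `⟨a, x⟩ < b` is monotone in every coordinate of the cube:
decreasing in `x j` when `0 ≤ a j`, increasing otherwise. With `ε j = ±1` the matching
orientation, each cut edge in direction `j` contributes exactly `1` to the nonnegative sum
`ε j * ∑_{u j = 0} (g u - g (u + e j))`, and pairing `u` with `u + e j` turns this sum into
`-ε j * ∑_x g x * s j x` for the spins `s j x = ±1`. Summing over `j`, the number of cut
edges is at most `∑_x |∑_j ε j * s j x|`, which by Cauchy–Schwarz and orthogonality of the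
spins is at most `√(2 ^ n * n * 2 ^ n) = √n * 2 ^ n`.
-/

section BooleanCube

variable {ι : Type*}

def spin (j : ι) (x : ι → Bool) : ℝ := if x j then 1 else -1

lemma spin_sq (j : ι) (x : ι → Bool) : spin j x ^ 2 = 1 := by
  unfold spin; split_ifs <;> norm_num

variable [DecidableEq ι]

def flipAt (j : ι) : Equiv.Perm (ι → Bool) :=
  Function.Involutive.toPerm (fun x => Function.update x j (!x j)) fun x => by simp

lemma flipAt_apply (j : ι) (x : ι → Bool) : flipAt j x = Function.update x j (!x j) := rfl

lemma spin_flipAt_self (j : ι) (x : ι → Bool) : spin j (flipAt j x) = -spin j x := by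
  cases h : x j <;> simp [spin, flipAt_apply, h]

lemma spin_flipAt_of_ne {i j : ι} (h : i ≠ j) (x : ι → Bool) :
    spin i (flipAt j x) = spin i x := by
  simp [spin, flipAt_apply, Function.update_of_ne h]

variable [Fintype ι]

lemma sum_spin_mul_spin (i k : ι) :
    ∑ x : ι → Bool, spin i x * spin k x = if i = k then 2 ^ Fintype.card ι else 0 := by
  split_ifs with h
  · subst h
    simp [← sq, spin_sq]
  · have := Equiv.sum_comp (flipAt i) fun x => spin i x * spin k x
    simp only [spin_flipAt_self, spin_flipAt_of_ne (Ne.symm h), neg_mul, sum_neg_distrib] at this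
    linarith

lemma sum_sq_sum_mul_spin (c : ι → ℝ) :
    ∑ x : ι → Bool, (∑ j, c j * spin j x) ^ 2 = 2 ^ Fintype.card ι * ∑ j, c j ^ 2 := by
  calc ∑ x : ι → Bool, (∑ j, c j * spin j x) ^ 2
      = ∑ i, ∑ k, c i * c k * ∑ x : ι → Bool, spin i x * spin k x := by
        simp_rw [sq, sum_mul_sum]
        simp only [mul_sum]
        rw [sum_comm]
        refine sum_congr rfl fun i _ => ?_
        rw [sum_comm]
        exact sum_congr rfl fun k _ => sum_congr rfl fun x _ => by ring
    _ = 2 ^ Fintype.card ι * ∑ j, c j ^ 2 := by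
        simp [sum_spin_mul_spin, mul_sum, sq, mul_comm]

lemma sum_abs_sum_mul_spin_le (c : ι → ℝ) :
    ∑ x : ι → Bool, |∑ j, c j * spin j x| ≤ √(∑ j, c j ^ 2) * 2 ^ Fintype.card ι := by
  have hcs :=
    sq_sum_le_card_mul_sum_sq (s := univ) (f := fun x : ι → Bool => |∑ j, c j * spin j x|)
  simp only [sq_abs, sum_sq_sum_mul_spin, card_univ, Fintype.card_fun, Fintype.card_bool] at hcs
  refine abs_le_of_sq_le_sq' ?_ (by positivity) |>.2
  rw [mul_pow, Real.sq_sqrt (sum_nonneg fun j _ => sq_nonneg (c j))]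
  exact hcs.trans_eq (by push_cast; ring)

lemma sum_sub_update_true_eq_neg_sum_mul_spin (φ : (ι → Bool) → ℝ) (j : ι) :
    ∑ u ∈ univ.filter (fun u => u j = false), (φ u - φ (Function.update u j true)) =
      -∑ x, φ x * spin j x := by
  have hpair : ∑ u ∈ univ.filter (fun u => u j = false), φ (Function.update u j true) =
      ∑ x ∈ univ.filter (fun x => x j = true), φ x :=
    sum_nbij' (fun u => Function.update u j true) (fun x => Function.update x j false)
      (by simp) (by simp) (fun u hu => by simp_all) (fun x hx => by simp_all) (fun _ _ => rfl)
  have hsplit : ∑ x, φ x * spin j x = ∑ x ∈ univ.filter (fun x => x j = true), φ x -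
      ∑ x ∈ univ.filter (fun x => x j = false), φ x := by
    simp only [spin, mul_ite, mul_one, mul_neg_one, sum_ite, sum_neg_distrib, Bool.not_eq_true]
    ring
  rw [sum_sub_distrib, hpair, hsplit]
  ring

end BooleanCube

section Hyperplane

variable {n : ℕ} (a : Fin n → ℝ) (b : ℝ)

lemma dotBool_update_true {u : Fin n → Bool} {j : Fin n} (hu : u j = false) :
    dotBool n a (Function.update u j true) = dotBool n a u + a j := by
  simp only [dotBool, ← add_sum_erase _ _ (mem_univ j), Function.update_self, hu]
  rw [sum_congr rfl fun i hi => by rw [Function.update_of_ne (ne_of_mem_erase hi)]]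
  simp only [if_true, if_false, Bool.false_eq_true]
  ring

noncomputable def lowerIndicator (x : Fin n → Bool) : ℝ := if dotBool n a x < b then 1 else 0

noncomputable def coordSign (j : Fin n) : ℝ := if 0 ≤ a j then 1 else -1

noncomputable def signedJump (u : Fin n → Bool) (j : Fin n) : ℝ :=
  coordSign a j * (lowerIndicator a b u - lowerIndicator a b (Function.update u j true))

lemma signedJump_nonneg {u : Fin n → Bool} {j : Fin n} (hu : u j = false) :
    0 ≤ signedJump a b u j := by
  unfold signedJump coordSign lowerIndicator
  rw [dotBool_update_true a hu]
  split_ifs <;> norm_num <;> linarith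

lemma one_le_signedJump {p : (Fin n → Bool) × Fin n} (hp : p ∈ cutEdges n a b) :
    1 ≤ signedJump a b p.1 p.2 := by
  obtain ⟨hu, hcut⟩ := (mem_filter.mp hp).2
  rw [dotBool_update_true a hu] at hcut
  unfold signedJump coordSign lowerIndicator
  rw [dotBool_update_true a hu]
  split_ifs <;> norm_num <;> rcases hcut with h | h <;> linarith [h.1, h.2]

lemma card_cutEdges_le_sum_signedJump :
    ((cutEdges n a b).card : ℝ) ≤
      ∑ j, ∑ u ∈ univ.filter (fun u => u j = false), signedJump a b u j := by
  calc ((cutEdges n a b).card : ℝ) = ∑ _p ∈ cutEdges n a b, (1 : ℝ) := by simp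
    _ ≤ ∑ p ∈ cutEdges n a b, signedJump a b p.1 p.2 :=
        sum_le_sum fun p hp => one_le_signedJump a b hp
    _ ≤ ∑ p ∈ univ.filter (fun p : (Fin n → Bool) × Fin n => p.1 p.2 = false),
          signedJump a b p.1 p.2 :=
        sum_le_sum_of_subset_of_nonneg (monotone_filter_right _ fun _ _ h => h.1)
          fun p hp _ => signedJump_nonneg a b (mem_filter.mp hp).2
    _ = _ := by
        simp only [sum_filter, Fintype.sum_prod_type_right]

lemma sum_signedJump_eq (j : Fin n) :
    ∑ u ∈ univ.filter (fun u => u j = false), signedJump a b u j =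
      -∑ x, lowerIndicator a b x * (coordSign a j * spin j x) := by
  simp only [signedJump, ← mul_sum, sum_sub_update_true_eq_neg_sum_mul_spin]
  simp only [mul_sum, mul_neg, mul_left_comm]

lemma card_cutEdges_le : ((cutEdges n a b).card : ℝ) ≤ √n * 2 ^ n := by
  calc ((cutEdges n a b).card : ℝ)
      ≤ ∑ j, ∑ u ∈ univ.filter (fun u => u j = false), signedJump a b u j :=
        card_cutEdges_le_sum_signedJump a b
    _ = ∑ x, lowerIndicator a b x * -∑ j, coordSign a j * spin j x := by
        simp only [sum_signedJump_eq, sum_neg_distrib, mul_neg, mul_sum]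
        rw [sum_comm]
    _ ≤ ∑ x, |∑ j, coordSign a j * spin j x| := by
        refine sum_le_sum fun x _ => ?_
        unfold lowerIndicator
        split_ifs
        · simpa using neg_le_abs _
        · simp
    _ ≤ √(∑ j, coordSign a j ^ 2) * 2 ^ Fintype.card (Fin n) :=
        sum_abs_sum_mul_spin_le (coordSign a)
    _ = √n * 2 ^ n := by
        simp [coordSign]

end Hyperplane

theorem oneil_hyperplane_cut_bound :
    ∃ C : ℝ, ∀ n : ℕ, 1 ≤ n → ∀ a : Fin n → ℝ, a ≠ 0 → ∀ b : ℝ,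
      ((cutEdges n a b).card : ℝ) ≤ C * Real.sqrt n * 2 ^ n :=
  ⟨1, fun n _ a _ b => by simpa using card_cutEdges_le a b⟩
end

section
/- If a hyperplane H = {x : ⟨a,x⟩ = b} in ℝ^n non-strictly cuts a set S of hypercube edges (meaning for each edge {u,v} ∈ S, ⟨a,u⟩ ≤ b ≤ ⟨a,v⟩ with at least one inequality strict), then there is a translated hyperplane {x : ⟨a,x⟩ = b'} that strictly cuts at least |S|/2 of the edges of S. -/
open Finset

/-- The hyperplane `⟨a, x⟩ = b` non-strictly cuts the edge `{u, update u i true}`: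
the values at the endpoints lie on both sides of `b` (weakly), with at least one of
the two inequalities strict. -/
def nonStrictCut (n : ℕ) (a : Fin n → ℝ) (b : ℝ) (u : Fin n → Bool) (i : Fin n) : Prop :=
  (dotBool n a u ≤ b ∧ b ≤ dotBool n a (Function.update u i true) ∨
    dotBool n a (Function.update u i true) ≤ b ∧ b ≤ dotBool n a u) ∧
  ¬ (dotBool n a u = b ∧ dotBool n a (Function.update u i true) = b)

/-- Strict cut of the edge `{u, update u i true}` by the hyperplane `⟨a, x⟩ = b'`. -/
def strictCut (n : ℕ) (a : Fin n → ℝ) (b : ℝ) (u : Fin n → Bool) (i : Fin n) : Prop :=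
  dotBool n a u < b ∧ b < dotBool n a (Function.update u i true) ∨
    dotBool n a (Function.update u i true) < b ∧ b < dotBool n a u

open Classical in
theorem translate_to_strict_cut (n : ℕ) (a : Fin n → ℝ) (b : ℝ)
    (S : Finset ((Fin n → Bool) × Fin n))
    (hS : ∀ p ∈ S, p.1 p.2 = false ∧ nonStrictCut n a b p.1 p.2) :
    ∃ b' : ℝ, S.card ≤ 2 * (S.filter fun p : (Fin n → Bool) × Fin n => strictCut n a b' p.1 p.2).card := by
  classical
  rcases S.eq_empty_or_nonempty with rfl | hne
  · exact ⟨b, by simp⟩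
  set f : ((Fin n → Bool) × Fin n) → ℝ :=
    fun p => min (dotBool n a p.1) (dotBool n a (Function.update p.1 p.2 true)) with hf
  set g : ((Fin n → Bool) × Fin n) → ℝ :=
    fun p => max (dotBool n a p.1) (dotBool n a (Function.update p.1 p.2 true)) with hg
  have hcut : ∀ (b' : ℝ) (p : (Fin n → Bool) × Fin n), f p < b' → b' < g p →
      strictCut n a b' p.1 p.2 := by
    intro b' p h1 h2
    simp only [hf, hg] at h1 h2
    unfold strictCut
    rcases le_total (dotBool n a p.1) (dotBool n a (Function.update p.1 p.2 true)) with h | h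
    · rw [min_eq_left h] at h1; rw [max_eq_right h] at h2; exact Or.inl ⟨h1, h2⟩
    · rw [min_eq_right h] at h1; rw [max_eq_left h] at h2; exact Or.inr ⟨h1, h2⟩
  have hkey : ∀ p ∈ S, f p ≤ b ∧ b ≤ g p ∧ (f p < b ∨ b < g p) := by
    intro p hp
    have h2 := (hS p hp).2
    unfold nonStrictCut at h2
    obtain ⟨hd, hne2⟩ := h2
    simp only [hf, hg]
    have hfb : min (dotBool n a p.1) (dotBool n a (Function.update p.1 p.2 true)) ≤ b := by
      rcases hd with ⟨h1, _⟩ | ⟨h1, _⟩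
      · exact le_trans (min_le_left _ _) h1
      · exact le_trans (min_le_right _ _) h1
    have hgb : b ≤ max (dotBool n a p.1) (dotBool n a (Function.update p.1 p.2 true)) := by
      rcases hd with ⟨_, h2⟩ | ⟨_, h2⟩
      · exact le_trans h2 (le_max_right _ _)
      · exact le_trans h2 (le_max_left _ _)
    refine ⟨hfb, hgb, ?_⟩
    by_contra hcon
    push_neg at hcon
    obtain ⟨hc1, hc2⟩ := hcon
    have ey : dotBool n a (Function.update p.1 p.2 true) = b := by
      have h1 : dotBool n a (Function.update p.1 p.2 true) ≤ b :=
        le_trans (le_max_right _ _) hc2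
      have h2 : b ≤ dotBool n a (Function.update p.1 p.2 true) :=
        le_trans hc1 (min_le_right _ _)
      exact le_antisymm h1 h2
    have ex' : dotBool n a p.1 = b := by
      have h1 : dotBool n a p.1 ≤ b := le_trans (le_max_left _ _) hc2
      have h2 : b ≤ dotBool n a p.1 := le_trans hc1 (min_le_left _ _)
      exact le_antisymm h1 h2
    exact hne2 ⟨ex', ey⟩
  set T1 := S.filter (fun p => f p < b) with hT1
  set T2 := S.filter (fun p => b < g p) with hT2
  have hunion : S ⊆ T1 ∪ T2 := by
    intro p hp
    rcases (hkey p hp).2.2 with h | h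
    · exact mem_union_left _ (mem_filter.mpr ⟨hp, h⟩)
    · exact mem_union_right _ (mem_filter.mpr ⟨hp, h⟩)
  have hcard : S.card ≤ T1.card + T2.card :=
    (card_le_card hunion).trans (card_union_le _ _)
  rcases le_total T1.card T2.card with hle | hle
  · rcases T2.eq_empty_or_nonempty with hT2e | hT2ne
    · exfalso
      have h0 : T2.card = 0 := by simp [hT2e]
      have hpos := hne.card_pos
      omega
    · set M := T2.inf' hT2ne g with hM
      have hbM : b < M :=
        (Finset.lt_inf'_iff hT2ne).mpr fun p hp => (mem_filter.mp hp).2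
      refine ⟨(b + M) / 2, ?_⟩
      have h1 : b < (b + M) / 2 := by linarith
      have h2 : (b + M) / 2 < M := by linarith
      have hsub : T2 ⊆ S.filter (fun p => strictCut n a ((b + M) / 2) p.1 p.2) := by
        intro p hp
        have hpS := (mem_filter.mp hp).1
        refine mem_filter.mpr ⟨hpS, hcut _ p ?_ ?_⟩
        · exact lt_of_le_of_lt (hkey p hpS).1 h1
        · exact lt_of_lt_of_le h2 (Finset.inf'_le g hp)
      have := card_le_card hsub
      omega
  · rcases T1.eq_empty_or_nonempty with hT1e | hT1ne
    · exfalso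
      have h0 : T1.card = 0 := by simp [hT1e]
      have hpos := hne.card_pos
      omega
    · set M := T1.sup' hT1ne f with hM
      have hMb : M < b :=
        (Finset.sup'_lt_iff hT1ne).mpr fun p hp => (mem_filter.mp hp).2
      refine ⟨(M + b) / 2, ?_⟩
      have h1 : M < (M + b) / 2 := by linarith
      have h2 : (M + b) / 2 < b := by linarith
      have hsub : T1 ⊆ S.filter (fun p => strictCut n a ((M + b) / 2) p.1 p.2) := by
        intro p hp
        have hpS := (mem_filter.mp hp).1
        refine mem_filter.mpr ⟨hpS, hcut _ p ?_ ?_⟩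
        · exact lt_of_le_of_lt (Finset.le_sup' f hp) h1
        · exact lt_of_lt_of_le h2 (hkey p hpS).2.1
      have := card_le_card hsub
      omega
end
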